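/- Tight Observability for Values: in the direct-style λ*ε-calculus, well-typed values cannot observe anything beyond their assigned qualifier: if Γ^φ | Σ ⊢ v : T^q ε for a value v, then Γ^q | Σ ⊢ v : T^q ∅, i.e., v can be typed with observation filter q and the empty effect. -/
import Mathlib


/-- Atoms: term variables and store locations. -/
inductive Atom : Type
  | var : ℕ → Atom
  | loc : ℕ → Atom
deriving DecidableEq

/-- Qualifiers, effects and observations: finite sets of atoms. -/
abbrev Qual : Type := Finset Atom

/-- Types of the direct-style λ*ε-calculus. `fn x p T ε r U` is `(x : T^p) →^ε U^r`. -/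
inductive Ty : Type
  | base : ℕ → Ty
  | fn : ℕ → Qual → Ty → Qual → Qual → Ty → Ty
  | ref : ℕ → Ty

/-- Entries of typing contexts / store typings. -/
abbrev Binding := ℕ × Ty × Qual
abbrev Ctx := List Binding
abbrev StoreTy := List Binding

/-- Lookup in an association list (most recent binding first). -/
def lookupL {α : Type} : List (ℕ × α) → ℕ → Option α
  | [], _ => none
  | (y, e) :: Γ, x => if x = y then some e else lookupL Γ x

def ctxAtoms (Γ : Ctx) : Qual := (Γ.map (fun b => Atom.var b.1)).toFinset
def styAtoms (St : StoreTy) : Qual := (St.map (fun b => Atom.loc b.1)).toFinset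

/-- Qualifier substitution `q[p/x]`. -/
def qsubst (q : Qual) (p : Qual) (x : ℕ) : Qual :=
  if Atom.var x ∈ q then (q.erase (Atom.var x)) ∪ p else q

/-- Term variables occurring in a qualifier. -/
def qVars (q : Qual) : Finset ℕ :=
  q.biUnion (fun a => match a with | Atom.var x => {x} | Atom.loc _ => ∅)

/-- Free term variables of a type. -/
def Ty.fv : Ty → Finset ℕ
  | .base _ => ∅
  | .ref _ => ∅
  | .fn x p T ε r U => qVars p ∪ T.fv ∪ ((qVars ε ∪ qVars r ∪ U.fv).erase x)

/-- Qualifier substitution, extended homomorphically to types. -/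
def Ty.qsubstT : Ty → Qual → ℕ → Ty
  | .base b, _, _ => .base b
  | .ref b, _, _ => .ref b
  | .fn y p T ε r U, q, x =>
      if y = x then .fn y (qsubst p q x) (T.qsubstT q x) ε r U
      else .fn y (qsubst p q x) (T.qsubstT q x) (qsubst ε q x) (qsubst r q x) (U.qsubstT q x)

/-- One-step reachability between atoms, as determined by Γ and Σ. -/
def Reaches (Γ : Ctx) (St : StoreTy) (a b : Atom) : Prop :=
  match a with
  | .var x => ∃ e : Ty × Qual, lookupL Γ x = some e ∧ b ∈ e.2
  | .loc l => ∃ e : Ty × Qual, lookupL St l = some e ∧ b ∈ e.2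

/-- `Sat Γ St q s` : `s` is the saturation (transitive reachability closure) `q*` of `q`. -/
def Sat (Γ : Ctx) (St : StoreTy) (q s : Qual) : Prop :=
  ∀ a, a ∈ s ↔ ∃ b ∈ q, Relation.ReflTransGen (Reaches Γ St) b a

/-- Qualifier subtyping (rule q-sub). -/
def SubQual (Γ : Ctx) (St : StoreTy) (p q : Qual) : Prop :=
  p ⊆ q ∧ q ⊆ ctxAtoms Γ ∪ styAtoms St

/-- Subtyping on ordinary types (rules s-base, s-ref, s-fun). -/
inductive SubTy : Ctx → StoreTy → Ty → Ty → Prop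
  | base {Γ St b} : SubTy Γ St (.base b) (.base b)
  | ref {Γ St b} : SubTy Γ St (.ref b) (.ref b)
  | fn {Γ St x o p q r ε₁ ε₂} {S U T V : Ty} :
      SubTy Γ St U S → SubQual Γ St p o →
      SubTy ((x, U, p) :: Γ) St T V →
      SubQual ((x, U, p) :: Γ) St q r →
      SubQual ((x, U, p) :: Γ) St ε₁ ε₂ →
      SubTy Γ St (.fn x o S ε₁ q T) (.fn x p U ε₂ r V)

/-- Subtyping on qualified types with effects (rule sqe-sub). -/
def SubQTy (Γ : Ctx) (St : StoreTy) (S : Ty) (p ε₁ : Qual) (T : Ty) (q ε₂ : Qual) : Prop :=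
  SubTy Γ St S T ∧ SubQual Γ St p q ∧ SubQual Γ St ε₁ ε₂

/-- Terms of the direct-style λ*ε-calculus. `cst b c` is the constant `c` of base type `b`;
`ref t₁ t₂` is `ref_{t₁} t₂`. -/
inductive Tm : Type
  | cst : ℕ → ℕ → Tm
  | fvar : ℕ → Tm
  | loc : ℕ → Tm
  | abs : ℕ → Tm → Tm
  | app : Tm → Tm → Tm
  | ref : Tm → Tm → Tm
  | deref : Tm → Tm
  | assign : Tm → Tm → Tm
  | lett : ℕ → Tm → Tm → Tm

/-- The base type `Alloc` of allocation capabilities. -/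
def allocB : ℕ := 0
/-- The base type `Unit`. -/
def unitB : ℕ := 1

/-- Term typing `Γ^φ | Σ ⊢ t : T^q ε` of the direct-style λ*ε-calculus. -/
inductive HasTy : Qual → Ctx → StoreTy → Tm → Ty → Qual → Qual → Prop
  | cst {φ Γ St b c} : HasTy φ Γ St (.cst b c) (.base b) ∅ ∅
  | var {φ Γ St x T q} :
      lookupL Γ x = some (T, q) → Atom.var x ∈ φ →
      HasTy φ Γ St (.fvar x) T {Atom.var x} ∅
  | loc {φ Γ St l T q} :
      lookupL St l = some (T, q) → Atom.loc l ∈ φ →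
      HasTy φ Γ St (.loc l) T {Atom.loc l} ∅
  | abs {φ Γ St x t T U p q r ε} :
      HasTy (insert (Atom.var x) q) ((x, T, p) :: Γ) St t U r ε →
      q ⊆ φ →
      HasTy φ Γ St (.abs x t) (.fn x p T ε r U) q ∅
  | app {φ Γ St t₁ t₂ x T U p q r ps qs ε₁ ε₂ ε₃} :
      HasTy φ Γ St t₁ (.fn x (ps ∩ qs) T ε₃ r U) q ε₁ →
      HasTy φ Γ St t₂ T p ε₂ →
      Sat Γ St p ps → Sat Γ St q qs →
      x ∉ U.fv → ε₃ ⊆ insert (Atom.var x) q → r ⊆ insert (Atom.var x) φ →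
      HasTy φ Γ St (.app t₁ t₂) U (qsubst r p x) (qsubst (ε₁ ∪ ε₂ ∪ ε₃) p x)
  | lett {φ Γ St x t₁ t₂ S T p q ps φs ε₁ ε₂} :
      HasTy φ Γ St t₁ S p ε₁ →
      Sat Γ St p ps → Sat Γ St φ φs →
      HasTy (insert (Atom.var x) φ) ((x, S, ps ∩ φs) :: Γ) St t₂ T q ε₂ →
      x ∉ T.fv →
      HasTy φ Γ St (.lett x t₁ t₂) T (qsubst q p x) (qsubst (ε₁ ∪ ε₂) p x)
  | ref {φ Γ St t₁ t₂ b q ε₁ ε₂} :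
      HasTy φ Γ St t₁ (.base allocB) q ε₁ →
      HasTy φ Γ St t₂ (.base b) ∅ ε₂ →
      HasTy φ Γ St (.ref t₁ t₂) (.ref b) ∅ (ε₁ ∪ ε₂ ∪ q)
  | deref {φ Γ St t b q ε} :
      HasTy φ Γ St t (.ref b) q ε →
      HasTy φ Γ St (.deref t) (.base b) ∅ (ε ∪ q)
  | assign {φ Γ St t₁ t₂ b q ε₁ ε₂} :
      HasTy φ Γ St t₁ (.ref b) q ε₁ →
      HasTy φ Γ St t₂ (.base b) ∅ ε₂ →
      HasTy φ Γ St (.assign t₁ t₂) (.base unitB) ∅ (ε₁ ∪ ε₂ ∪ q)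
  | sub {φ Γ St t S T p q ε₁ ε₂} :
      HasTy φ Γ St t S p ε₁ → SubQTy Γ St S p ε₁ T q ε₂ →
      q ⊆ φ → ε₂ ⊆ φ →
      HasTy φ Γ St t T q ε₂

/-- Values of the direct-style λ*ε-calculus: constants, λ-abstractions, and locations. -/
inductive IsValue : Tm → Prop
  | cst {b c} : IsValue (.cst b c)
  | abs {x t} : IsValue (.abs x t)
  | loc {l} : IsValue (.loc l)

/-- Filter widening for values. -/
theorem filter_mono {φ Γ St v T q ε} (hv : IsValue v)
    (h : HasTy φ Γ St v T q ε) {φ' : Qual} (hφ : φ ⊆ φ') :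
    HasTy φ' Γ St v T q ε := by
  induction h generalizing φ' with
  | cst => exact .cst
  | var h hm => exact .var h (hφ hm)
  | loc h hm => exact .loc h (hφ hm)
  | abs ht hs _ => exact .abs ht (hs.trans hφ)
  | app => cases hv
  | lett => cases hv
  | ref => cases hv
  | deref => cases hv
  | assign => cases hv
  | sub h hs hq hε ih =>
    exact .sub (ih hv hφ) hs (hq.trans hφ) (hε.trans hφ)

/-- **Tight Observability for Values**: if `Γ^φ | Σ ⊢ v : T^q ε` for a value `v`,
then `Γ^q | Σ ⊢ v : T^q ∅`. -/
theorem tight_observability_for_values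
    (φ : Qual) (Γ : Ctx) (St : StoreTy) (v : Tm) (T : Ty) (q ε : Qual)
    (hv : IsValue v)
    (h : HasTy φ Γ St v T q ε) :
    HasTy q Γ St v T q ∅ := by
  induction h with
  | cst => exact .cst
  | var h _ => exact .var h (Finset.mem_singleton_self _)
  | loc h _ => exact .loc h (Finset.mem_singleton_self _)
  | abs ht _ _ => exact .abs ht (subset_refl _)
  | app => cases hv
  | lett => cases hv
  | ref => cases hv
  | deref => cases hv
  | assign => cases hv
  | sub h hs hq hε ih =>
    obtain ⟨hT, hpq, _⟩ := hs
    exact HasTy.sub (filter_mono hv (ih hv) hpq.1)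
      ⟨hT, hpq, Finset.Subset.refl _, Finset.empty_subset _⟩
      (Finset.Subset.refl _) (Finset.empty_subset _)
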